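/- Let T be a downward-closed family of functions t : α → ω (α < ω₁) such that (T, ⊊) is an ℵ₁-tree in which every node admits infinitely many immediate successors. For each α < ω₁ fix an injection φ_α : T_{α+1} → ω, and define r_m : ω → 2 by r_m(n) = 1 iff n < m (so that the first point of disagreement of r_m and r_{m'} is min{m, m'} for m ≠ m'). Define ψ : T → ⋃_{β<ω₁}{h : β → 2} recursively by: ψ(∅) = ∅; ψ(t) = ⋃{ψ(t') | t' ⊊ t, t' ∈ T} for t of limit height; and ψ(t) = ψ(t⁻)⌢r_{φ_α(t)} for t ∈ T_{α+1}, where t⁻ = t↾α is the immediate predecessor of t (so dom(ψ(t)) = ω·h(t), where h(t) = dom(t)). Let S := {s↾β | s ∈ im(ψ), β ≤ dom(s)}. Then S is a binary ℵ₁-tree, and every automorphism of (S, ⊊) is the identity map. -/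

import Mathlib

noncomputable section

open Cardinal Set

/-- The first uncountable ordinal `ω₁`. -/
def omega1 : Ordinal := (Cardinal.aleph 1).ord

/-- A transfinite binary sequence: a function `t : α → 2` for some ordinal `α`. -/
abbrev BinSeq : Type 1 := Σ α : Ordinal, (Set.Iio α → Bool)

namespace BinSeq

/-- The restriction `t ↾ β` of a binary sequence `t` to an initial segment of its domain. -/
def restrict (t : BinSeq) (β : Ordinal) (h : β ≤ t.1) : BinSeq :=
  ⟨β, fun x => t.2 ⟨x.1, lt_of_lt_of_le x.2 h⟩⟩

/-- `s.sub t`: `s` is an initial segment of `t` (that is, `s ⊆ t`). -/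
def sub (s t : BinSeq) : Prop := ∃ h : s.1 ≤ t.1, t.restrict s.1 h = s

/-- `s.ssub t`: `s` is a proper initial segment of `t` (that is, `s ⊊ t`). -/
def ssub (s t : BinSeq) : Prop := ∃ h : s.1 < t.1, t.restrict s.1 h.le = s

end BinSeq

/-- A candidate branch: a function `f : ω₁ → 2`. -/
abbrev BinBranch : Type 1 := Set.Iio omega1 → Bool

/-- The restriction `f ↾ α` of `f : ω₁ → 2` to an ordinal `α < ω₁`. -/
def BinBranch.restrict (f : BinBranch) (α : Ordinal) (h : α < omega1) : BinSeq :=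
  ⟨α, fun x => f ⟨x.1, lt_trans x.2 h⟩⟩

/-- `C` is a closed unbounded (club) subset of `ω₁`: it is a set of countable ordinals,
unbounded in `ω₁`, and closed under suprema of bounded nonempty subsets. -/
def IsClubBelow (C : Set Ordinal) : Prop :=
  C ⊆ Set.Iio omega1 ∧
  (∀ β < omega1, ∃ α ∈ C, β < α) ∧
  (∀ s : Set Ordinal, s ⊆ C → s.Nonempty → sSup s < omega1 → sSup s ∈ C)

/-- `S` is a stationary subset of `ω₁`: it meets every club subset of `ω₁`. -/
def IsStationaryBelow (S : Set Ordinal) : Prop :=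
  ∀ C : Set Ordinal, IsClubBelow C → (S ∩ C).Nonempty

/-- `T` is a binary ℵ₁-tree: a downward closed family of binary sequences of
countable length, all of whose levels are countable. -/
structure IsBinaryAleph1Tree (T : Set BinSeq) : Prop where
  dom_lt : ∀ t ∈ T, t.1 < omega1
  downward_closed : ∀ t ∈ T, ∀ β, ∀ h : β ≤ t.1, t.restrict β h ∈ T
  countable_levels : ∀ α < omega1, {t | t ∈ T ∧ t.1 = α}.Countable

/-- The set of cofinal branches of a binary tree:
functions `f : ω₁ → 2` all of whose initial segments lie in `T`. -/
def BinBranches (T : Set BinSeq) : Set BinBranch :=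
  {f | ∀ α, ∀ h : α < omega1, f.restrict α h ∈ T}

/-- A binary Kurepa tree: a binary ℵ₁-tree with at least ℵ₂-many cofinal branches. -/
def IsBinaryKurepa (T : Set BinSeq) : Prop :=
  IsBinaryAleph1Tree T ∧ Cardinal.aleph 2 ≤ #(↥(BinBranches T))

/-- `◇(T)` for a binary tree `T`: there is a transversal `⟨t_α | α < ω₁⟩` with `t_α ∈ T_α`
such that for every cofinal branch `f` of `T`, the set `{α < ω₁ | f ↾ α = t_α}` is stationary. -/
def BinDiamond (T : Set BinSeq) : Prop :=
  ∃ t : Ordinal → BinSeq,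
    (∀ α < omega1, t α ∈ T ∧ (t α).1 = α) ∧
    ∀ f ∈ BinBranches T,
      IsStationaryBelow {α | ∃ h : α < omega1, BinBranch.restrict f α h = t α}

/-- An abstract tree: a strict partial order in which the set of predecessors
of every point is well-ordered. -/
structure OTree where
  carrier : Type
  lt : carrier → carrier → Prop
  lt_trans : ∀ {x y z}, lt x y → lt y z → lt x z
  lt_irrefl : ∀ x, ¬ lt x x
  pred_wellOrder : ∀ x, IsWellOrder {y // lt y x} fun a b => lt a.1 b.1

namespace OTree

/-- The height of a node: the order type of its set of predecessors. -/
def height (t : OTree) (x : t.carrier) : Ordinal :=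
  @Ordinal.type {y // t.lt y x} (fun a b => t.lt a.1 b.1) (t.pred_wellOrder x)

/-- The `α`-th level of the tree. -/
def level (t : OTree) (α : Ordinal) : Set t.carrier := {x | t.height x = α}

/-- An ℵ₁-tree: a tree of height `ω₁` all of whose levels are countable. -/
def IsAleph1Tree (t : OTree) : Prop :=
  (∀ x, t.height x < omega1) ∧
  (∀ α < omega1, (t.level α).Nonempty) ∧
  (∀ α < omega1, (t.level α).Countable)

/-- A tree is Hausdorff if nodes of the same limit height
with the same predecessors are equal. -/
def Hausdorff (t : OTree) : Prop :=
  ∀ x y : t.carrier, Order.IsSuccLimit (t.height x) → t.height x = t.height y →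
    {z | t.lt z x} = {z | t.lt z y} → x = y

/-- The set of cofinal branches: uncountable maximal chains. -/
def branches (t : OTree) : Set (Set t.carrier) :=
  {C | IsMaxChain t.lt C ∧ ¬ C.Countable}

/-- A Kurepa tree: an ℵ₁-tree with at least ℵ₂-many cofinal branches. -/
def IsKurepa (t : OTree) : Prop :=
  t.IsAleph1Tree ∧ Cardinal.aleph 2 ≤ #(↥t.branches)

/-- `◇(𝐓)`: there is a transversal `⟨b_α | α < ω₁⟩` with `b_α ∈ T_α` such that for every
cofinal branch `f`, the set `{α < ω₁ | f ↾ α = b_α}` (i.e. the set of `α < ω₁` such that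
`b_α` is the unique element of `f` on the `α`-th level) is stationary. -/
def Diamond (t : OTree) : Prop :=
  ∃ b : Ordinal → t.carrier,
    (∀ α < omega1, b α ∈ t.level α) ∧
    ∀ f ∈ t.branches,
      IsStationaryBelow {α | α < omega1 ∧ f ∩ t.level α = {b α}}

/-- A tree has height `ω₁` if every node has countable height
and every countable level is nonempty. -/
def HasHeightOmega1 (t : OTree) : Prop :=
  (∀ x, t.height x < omega1) ∧ ∀ α < omega1, (t.level α).Nonempty

end OTree

/-- A transfinite sequence of natural numbers: a function `t : α → ω` for an ordinal `α`. -/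
abbrev OmSeq : Type 1 := Σ α : Ordinal, (Set.Iio α → ℕ)

/-- Restriction of an `OmSeq` to an initial segment of its domain. -/
def OmSeq.restrict (t : OmSeq) (β : Ordinal) (h : β ≤ t.1) : OmSeq :=
  ⟨β, fun x => t.2 ⟨x.1, lt_of_lt_of_le x.2 h⟩⟩

/-- `s.sub t`: `s` is an initial segment of `t`. -/
def OmSeq.sub (s t : OmSeq) : Prop := ∃ h : s.1 ≤ t.1, t.restrict s.1 h = s

/-!
Each `ψ(t)` is a concatenation of blocks of length `ω`, the `α`-th one being `r_m` with
`m = φ_α(t ↾ (α + 1))`. Let `s ⊆ ψ(t)` have length `ω·α + n + 1`. If its last bit is `1`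
(`n < m`), infinitely many successors of `t ↾ α` give one `v` with `φ_α(v) > m`, and the codes
of `t ↾ (α + 1)` and `v` split above `s` at `ω·α + m`. If it is `0` (`m ≤ n`), it pins down `m`,
so all extensions of `s` ending before `ω·(α + 1)` are comparable. So the last bit can be read off
the order `(S, ⊊)` and the lengths, which automorphisms preserve; an automorphism thus fixes
the last bit of every node of successor length, and by induction on the length every node.
-/

open Ordinal

namespace BinSeq

/-- `false` outside the domain of `s`. -/
def bit (s : BinSeq) (x : Ordinal) : Bool := if h : x < s.1 then s.2 ⟨x, h⟩ else false

lemma bit_of_lt {s : BinSeq} {x : Ordinal} (h : x < s.1) : s.bit x = s.2 ⟨x, h⟩ := dif_pos h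

lemma ext_bit {s t : BinSeq} (h : s.1 = t.1) (hbit : ∀ x < s.1, s.bit x = t.bit x) : s = t := by
  obtain ⟨α, f⟩ := s
  obtain ⟨β, g⟩ := t
  obtain rfl : α = β := h
  congr
  funext x
  have := hbit x.1 x.2
  rwa [bit_of_lt (s := ⟨α, f⟩) x.2, bit_of_lt (s := ⟨α, g⟩) x.2] at this

lemma bit_restrict (s : BinSeq) {β : Ordinal} (h : β ≤ s.1) {x : Ordinal} (hx : x < β) :
    (s.restrict β h).bit x = s.bit x := by
  rw [bit_of_lt (show x < (s.restrict β h).1 from hx), bit_of_lt (hx.trans_le h)]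
  rfl

lemma sub_iff_bit {s t : BinSeq} : s.sub t ↔ s.1 ≤ t.1 ∧ ∀ x < s.1, s.bit x = t.bit x := by
  constructor
  · rintro ⟨h, hs⟩
    refine ⟨h, fun x hx => ?_⟩
    have := bit_restrict t h hx
    rwa [hs] at this
  · rintro ⟨h, hbit⟩
    exact ⟨h, ext_bit rfl fun x hx => (bit_restrict t h hx).trans (hbit x hx).symm⟩

lemma sub.bit_eq {s t : BinSeq} (h : s.sub t) {x : Ordinal} (hx : x < s.1) :
    s.bit x = t.bit x :=
  (sub_iff_bit.1 h).2 x hx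

lemma ssub_iff_sub_and_lt {s t : BinSeq} : s.ssub t ↔ s.sub t ∧ s.1 < t.1 :=
  ⟨fun ⟨h, e⟩ => ⟨⟨h.le, e⟩, h⟩, fun ⟨⟨_, e⟩, h⟩ => ⟨h, e⟩⟩

lemma ssub.sub {s t : BinSeq} (h : s.ssub t) : s.sub t :=
  (ssub_iff_sub_and_lt.1 h).1

lemma restrict_sub (s : BinSeq) (β : Ordinal) (h : β ≤ s.1) : (s.restrict β h).sub s :=
  ⟨h, rfl⟩

lemma sub.trans {r s t : BinSeq} (hrs : r.sub s) (hst : s.sub t) : r.sub t := by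
  rw [sub_iff_bit] at *
  exact ⟨hrs.1.trans hst.1, fun x hx => (hrs.2 x hx).trans (hst.2 x (hx.trans_le hrs.1))⟩

lemma sub_of_sub_of_le {r s t : BinSeq} (hrt : r.sub t) (hst : s.sub t) (h : r.1 ≤ s.1) :
    r.sub s := by
  rw [sub_iff_bit] at *
  exact ⟨h, fun x hx => (hrt.2 x hx).trans (hst.2 x (hx.trans_le h)).symm⟩

lemma eq_of_sub_of_sub {r s t : BinSeq} (hrt : r.sub t) (hst : s.sub t) (h : r.1 = s.1) :
    r = s :=
  ext_bit h fun _ hx => (hrt.bit_eq hx).trans (hst.bit_eq (h ▸ hx)).symm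

end BinSeq

lemma countable_Iic_of_lt_omega1 {α : Ordinal.{0}} (h : α < omega1) : (Set.Iic α).Countable := by
  rw [← Set.Iio_insert, Set.countable_insert, ← le_aleph0_iff_set_countable,
    Cardinal.mk_Iio_ordinal, lift_le_aleph0, ← lt_aleph_one_iff, ← lt_ord]
  exact h

lemma omega0_mul_lt_omega1 {α : Ordinal} (h : α < omega1) : ω * α < omega1 := by
  refine isPrincipal_mul_ord (aleph0_le_aleph 1) ?_ h
  rw [ord_aleph]
  exact omega0_lt_omega_one

lemma omega0_mul_add_natCast_lt (α : Ordinal) (k : ℕ) : ω * α + k < ω * (α + 1) := by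
  rw [mul_add_one]
  exact (add_lt_add_iff_left _).2 (natCast_lt_omega0 k)

lemma lt_of_omega0_mul_add_lt {α β x : Ordinal} (hx : ω * α ≤ x) (h : x < ω * β) : α < β :=
  lt_of_mul_lt_mul_left (hx.trans_lt h) zero_le

lemma lt_omega0_mul_add_one_iff {x α : Ordinal} :
    x < ω * (α + 1) ↔ x < ω * α ∨ ∃ k : ℕ, x = ω * α + k := by
  refine ⟨fun h => ?_, ?_⟩
  · refine (lt_or_ge x (ω * α)).imp_right fun hx => ?_
    obtain ⟨k, hk⟩ := lt_omega0.1 ((add_lt_add_iff_left (ω * α)).1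
      ((Ordinal.add_sub_cancel_of_le hx).trans_lt (by rwa [← mul_add_one])))
    exact ⟨k, by rw [← hk, Ordinal.add_sub_cancel_of_le hx]⟩
  · rintro (h | ⟨k, rfl⟩)
    · exact h.trans_le (mul_le_mul_right le_self_add ω)
    · exact omega0_mul_add_natCast_lt α k

lemma exists_eq_omega0_mul_add_natCast (δ : Ordinal) : ∃ α, ∃ n : ℕ, δ = ω * α + n := by
  obtain ⟨n, hn⟩ := lt_omega0.1 (mod_lt δ omega0_ne_zero)
  exact ⟨δ / ω, n, by rw [← hn, div_add_mod]⟩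

lemma Nat.eq_of_forall_le_lt_iff {m m' n : ℕ} (hm : m ≤ n) (hm' : m' ≤ n)
    (h : ∀ j ≤ n, j < m ↔ j < m') : m = m' := by
  have := h m hm
  have := h m' hm'
  omega

structure IsTreeAut (S : Set BinSeq) (π : BinSeq → BinSeq) : Prop where
  bijOn : BijOn π S S
  ssub_iff : ∀ s ∈ S, ∀ s' ∈ S, s.ssub s' ↔ (π s).ssub (π s')

def SplitsInBlock (S : Set BinSeq) (α : Ordinal) (s : BinSeq) : Prop :=
  ∃ y ∈ S, ∃ z ∈ S, s.ssub y ∧ s.ssub z ∧ y.1 = z.1 ∧ y.1 < ω * (α + 1) ∧ y ≠ z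

namespace IsTreeAut

variable {S : Set BinSeq} {π : BinSeq → BinSeq}

lemma symm (hπ : IsTreeAut S π) : IsTreeAut S (Function.invFunOn π S) := by
  have hinv : InvOn (Function.invFunOn π S) π S S := hπ.bijOn.invOn_invFunOn
  have hσ : BijOn (Function.invFunOn π S) S S := hπ.bijOn.symm hinv.symm
  refine ⟨hσ, fun s hs s' hs' => ?_⟩
  rw [hπ.ssub_iff _ (hσ.mapsTo hs) _ (hσ.mapsTo hs'), hinv.2 hs, hinv.2 hs']

lemma length_le (hπ : IsTreeAut S π) (hS : ∀ s ∈ S, ∀ β, ∀ h : β ≤ s.1, s.restrict β h ∈ S)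
    {s : BinSeq} (hs : s ∈ S) : s.1 ≤ (π s).1 := by
  obtain ⟨β, hβ⟩ : ∃ β, s.1 = β := ⟨_, rfl⟩
  induction β using WellFoundedLT.induction generalizing s with
  | _ β ih =>
  by_contra! hlt
  have hr := hS s hs _ hlt.le
  have hπr := (hπ.ssub_iff _ hr s hs).1 ⟨hlt, rfl⟩
  exact (ih _ (hβ ▸ hlt) hr rfl).not_gt hπr.1

lemma length_eq (hπ : IsTreeAut S π) (hS : ∀ s ∈ S, ∀ β, ∀ h : β ≤ s.1, s.restrict β h ∈ S)
    {s : BinSeq} (hs : s ∈ S) : (π s).1 = s.1 := by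
  have h := hπ.symm.length_le hS (hπ.bijOn.mapsTo hs)
  rw [hπ.bijOn.invOn_invFunOn.1 hs] at h
  exact le_antisymm h (hπ.length_le hS hs)

lemma eq_self_of_bit_eq (hπ : IsTreeAut S π)
    (hS : ∀ s ∈ S, ∀ β, ∀ h : β ≤ s.1, s.restrict β h ∈ S)
    (hbit : ∀ s ∈ S, ∀ δ, s.1 = δ + 1 → (π s).bit δ = s.bit δ) {s : BinSeq} (hs : s ∈ S) :
    π s = s := by
  obtain ⟨β, hβ⟩ : ∃ β, s.1 = β := ⟨_, rfl⟩
  induction β using WellFoundedLT.induction generalizing s with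
  | _ β ih =>
  have hlen := hπ.length_eq hS hs
  refine BinSeq.ext_bit hlen fun x hx => ?_
  rw [hlen] at hx
  rcases (Order.add_one_le_of_lt hx).lt_or_eq with hlt | heq
  · have hr := hS s hs (x + 1) hlt.le
    have hsub := (hπ.ssub_iff _ hr s hs).1 ⟨hlt, rfl⟩
    rw [ih _ (hβ ▸ hlt) hr rfl] at hsub
    have hxx : x < x + 1 := Order.lt_add_one_iff.2 le_rfl
    rw [← hsub.sub.bit_eq hxx, BinSeq.bit_restrict _ _ hxx]
  · exact hbit s hs x heq.symm

lemma splitsInBlock (hπ : IsTreeAut S π)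
    (hS : ∀ s ∈ S, ∀ β, ∀ h : β ≤ s.1, s.restrict β h ∈ S) {α : Ordinal} {s : BinSeq}
    (hs : s ∈ S) (h : SplitsInBlock S α s) : SplitsInBlock S α (π s) := by
  obtain ⟨y, hy, z, hz, hsy, hsz, hyz, hlt, hne⟩ := h
  refine ⟨π y, hπ.bijOn.mapsTo hy, π z, hπ.bijOn.mapsTo hz, (hπ.ssub_iff s hs y hy).1 hsy,
    (hπ.ssub_iff s hs z hz).1 hsz, ?_, ?_, fun h => hne (hπ.bijOn.injOn hy hz h)⟩
  · rw [hπ.length_eq hS hy, hπ.length_eq hS hz, hyz]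
  · rwa [hπ.length_eq hS hy]

lemma splitsInBlock_iff (hπ : IsTreeAut S π)
    (hS : ∀ s ∈ S, ∀ β, ∀ h : β ≤ s.1, s.restrict β h ∈ S) {α : Ordinal} {s : BinSeq}
    (hs : s ∈ S) : SplitsInBlock S α (π s) ↔ SplitsInBlock S α s := by
  refine ⟨fun h => ?_, hπ.splitsInBlock hS hs⟩
  have h' := hπ.symm.splitsInBlock hS (hπ.bijOn.mapsTo hs) h
  rwa [hπ.bijOn.invOn_invFunOn.1 hs] at h'

end IsTreeAut

lemma OmSeq.restrict_sub (t : OmSeq) (β : Ordinal) (h : β ≤ t.1) :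
    OmSeq.sub (t.restrict β h) t :=
  ⟨h, rfl⟩

lemma OmSeq.sub_refl (t : OmSeq) : OmSeq.sub t t := ⟨le_rfl, rfl⟩

lemma OmSeq.mem_of_sub {T : Set OmSeq} (hdc : ∀ t ∈ T, ∀ β, ∀ h : β ≤ t.1, t.restrict β h ∈ T)
    {u t : OmSeq} (ht : t ∈ T) (hut : OmSeq.sub u t) : u ∈ T := by
  obtain ⟨h, e⟩ := hut
  exact e ▸ hdc t ht _ h

lemma exists_succ_lt_code {T : Set OmSeq} {φ : Ordinal → OmSeq → ℕ}
    (hsplit : ∀ t ∈ T, {t' | t' ∈ T ∧ t'.1 = t.1 + 1 ∧ t.sub t'}.Infinite)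
    (hφ : ∀ α, InjOn (φ α) {t | t ∈ T ∧ t.1 = α + 1}) {u : OmSeq} (hu : u ∈ T) (m : ℕ) :
    ∃ v ∈ T, v.1 = u.1 + 1 ∧ OmSeq.sub u v ∧ m < φ u.1 v := by
  have hinj : InjOn (φ u.1) {v | v ∈ T ∧ v.1 = u.1 + 1 ∧ OmSeq.sub u v} :=
    (hφ u.1).mono fun _ hv => And.intro hv.1 hv.2.1
  obtain ⟨_, ⟨v, hv, rfl⟩, hlt⟩ := ((hsplit u hu).image hinj).exists_gt m
  exact ⟨v, hv.1, hv.2.1, hv.2.2, hlt⟩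

lemma not_splitsInBlock_of_bit_false {S : Set BinSeq} {α : Ordinal}
    (hcode : ∀ y ∈ S, ∃ m : ℕ, ∀ k : ℕ, ω * α + k < y.1 → y.bit (ω * α + k) = decide (k < m))
    {s : BinSeq} {n : ℕ} (hlen : s.1 = ω * α + n + 1) (hbit : s.bit (ω * α + n) = false) :
    ¬ SplitsInBlock S α s := by
  rintro ⟨y, hy, z, hz, hsy, hsz, hyz, hlt, hne⟩
  have hjs : ∀ j ≤ n, ω * α + j < s.1 := fun j hj =>
    hlen ▸ ((add_le_add_iff_left _).2 (Nat.cast_le.2 hj)).trans_lt (Order.lt_add_one_iff.2 le_rfl)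
  have hcode_ext : ∀ w ∈ S, s.ssub w → ∃ m ≤ n,
      (∀ k : ℕ, ω * α + k < w.1 → w.bit (ω * α + k) = decide (k < m)) ∧
      ∀ j ≤ n, s.bit (ω * α + j) = decide (j < m) := by
    intro w hw hsw
    obtain ⟨m, hm⟩ := hcode w hw
    have hsm : ∀ j ≤ n, s.bit (ω * α + j) = decide (j < m) := fun j hj =>
      (hsw.sub.bit_eq (hjs j hj)).trans (hm j ((hjs j hj).trans hsw.1))
    refine ⟨m, ?_, hm, hsm⟩
    simpa [hbit] using hsm n le_rfl
  obtain ⟨my, hmyn, hmy, hsmy⟩ := hcode_ext y hy hsy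
  obtain ⟨mz, hmzn, hmz, hsmz⟩ := hcode_ext z hz hsz
  have hm : my = mz := Nat.eq_of_forall_le_lt_iff hmyn hmzn fun j hj => by
    simpa using (hsmy j hj).symm.trans (hsmz j hj)
  refine hne (BinSeq.ext_bit hyz fun x hx => ?_)
  rcases lt_omega0_mul_add_one_iff.1 (hx.trans hlt) with hx' | ⟨k, rfl⟩
  · have hxs : x < s.1 := hx'.trans_le (hlen ▸ le_self_add.trans le_self_add)
    rw [← hsy.sub.bit_eq hxs, hsz.sub.bit_eq hxs]
  · rw [hmy k hx, hmz k (hyz ▸ hx), hm]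

def codedTree (T : Set OmSeq) (ψ : OmSeq → BinSeq) : Set BinSeq :=
  {s | ∃ t ∈ T, BinSeq.sub s (ψ t)}

/-- The recursion `ψ(t) = ψ(t⁻) ⌢ r_{φ_α(t)}` for `t ∈ T_{α+1}`, with `r_m(n) = 1 ↔ n < m`,
recorded by the properties of `ψ` it entails. -/
structure IsBlockCoding (T : Set OmSeq) (φ : Ordinal → OmSeq → ℕ) (ψ : OmSeq → BinSeq) :
    Prop where
  length_eq : ∀ t ∈ T, (ψ t).1 = ω * t.1
  sub_of_restrict : ∀ t ∈ T, ∀ β, ∀ h : β ≤ t.1, BinSeq.sub (ψ (t.restrict β h)) (ψ t)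
  block_eq : ∀ t ∈ T, ∀ α, t.1 = α + 1 → ∀ n : ℕ, ∀ h : ω * α + (n : Ordinal) < (ψ t).1,
    (ψ t).2 ⟨ω * α + (n : Ordinal), h⟩ = decide (n < φ α t)

namespace IsBlockCoding

variable {T : Set OmSeq} {φ : Ordinal → OmSeq → ℕ} {ψ : OmSeq → BinSeq}

lemma map_sub (hψ : IsBlockCoding T φ ψ) {u t : OmSeq} (ht : t ∈ T) (hut : OmSeq.sub u t) :
    (ψ u).sub (ψ t) := by
  obtain ⟨h, e⟩ := hut
  have := hψ.sub_of_restrict t ht u.1 h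
  rwa [e] at this

lemma bit_omega0_mul_add (hψ : IsBlockCoding T φ ψ)
    (hdc : ∀ t ∈ T, ∀ β, ∀ h : β ≤ t.1, t.restrict β h ∈ T)
    {u t : OmSeq} (ht : t ∈ T) (hut : OmSeq.sub u t) {α : Ordinal} (hu : u.1 = α + 1)
    (k : ℕ) : (ψ t).bit (ω * α + k) = decide (k < φ α u) := by
  have huT := OmSeq.mem_of_sub hdc ht hut
  have hk : ω * α + k < (ψ u).1 := by
    rw [hψ.length_eq u huT, hu]
    exact omega0_mul_add_natCast_lt α k
  rw [← (hψ.map_sub ht hut).bit_eq hk, BinSeq.bit_of_lt hk, hψ.block_eq u huT α hu k hk]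

lemma isBinaryAleph1Tree (hψ : IsBlockCoding T φ ψ) (hdom : ∀ t ∈ T, t.1 < omega1)
    (hdc : ∀ t ∈ T, ∀ β, ∀ h : β ≤ t.1, t.restrict β h ∈ T)
    (hcnt : ∀ α < omega1, {t | t ∈ T ∧ t.1 = α}.Countable) :
    IsBinaryAleph1Tree (codedTree T ψ) where
  dom_lt := by
    rintro s ⟨t, ht, hst⟩
    exact hst.1.trans_lt (hψ.length_eq t ht ▸ omega0_mul_lt_omega1 (hdom t ht))
  downward_closed := by
    rintro s ⟨t, ht, hst⟩ β h
    exact ⟨t, ht, (s.restrict_sub β h).trans hst⟩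
  countable_levels α hα := by
    have hT : {t | t ∈ T ∧ t.1 ≤ α}.Countable := by
      have hunion : {t | t ∈ T ∧ t.1 ≤ α} = ⋃ β ∈ Iic α, {t | t ∈ T ∧ t.1 = β} := by
        ext t
        simp
      rw [hunion]
      exact (countable_Iic_of_lt_omega1 hα).biUnion fun β hβ => hcnt β (lt_of_le_of_lt hβ hα)
    refine (hT.biUnion fun t _ => Set.Subsingleton.countable
      (s := {s | BinSeq.sub s (ψ t) ∧ s.1 = α}) fun a ha b hb =>
        BinSeq.eq_of_sub_of_sub ha.1 hb.1 (ha.2.trans hb.2.symm)).mono ?_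
    rintro s ⟨⟨t, ht, hst⟩, rfl⟩
    rcases le_or_gt t.1 s.1 with h | h
    · exact mem_biUnion ⟨ht, h⟩ ⟨hst, rfl⟩
    · have hu := hdc t ht _ h.le
      refine mem_biUnion ⟨hu, le_rfl⟩
        ⟨BinSeq.sub_of_sub_of_le hst (hψ.map_sub ht (t.restrict_sub _ _)) ?_, rfl⟩
      rw [hψ.length_eq _ hu]
      exact le_mul_right _ omega0_pos

lemma exists_code (hψ : IsBlockCoding T φ ψ)
    (hdc : ∀ t ∈ T, ∀ β, ∀ h : β ≤ t.1, t.restrict β h ∈ T) {s : BinSeq}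
    (hs : s ∈ codedTree T ψ) (α : Ordinal) :
    ∃ m : ℕ, ∀ k : ℕ, ω * α + k < s.1 → s.bit (ω * α + k) = decide (k < m) := by
  obtain ⟨t, ht, hst⟩ := hs
  by_cases hα : α < t.1
  · refine ⟨φ α (t.restrict (α + 1) (Order.add_one_le_of_lt hα)), fun k hk => ?_⟩
    rw [hst.bit_eq hk]
    exact hψ.bit_omega0_mul_add hdc ht (t.restrict_sub _ _) rfl k
  · refine ⟨0, fun k hk => absurd (lt_of_omega0_mul_add_lt (x := ω * α + k) le_self_add ?_) hα⟩
    exact hk.trans_le (hst.1.trans_eq (hψ.length_eq t ht))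

lemma splitsInBlock_of_lt (hψ : IsBlockCoding T φ ψ)
    (hdc : ∀ t ∈ T, ∀ β, ∀ h : β ≤ t.1, t.restrict β h ∈ T) {u u₁ v : OmSeq}
    (hu₁ : u₁ ∈ T) (hv : v ∈ T) (huu₁ : OmSeq.sub u u₁) (huv : OmSeq.sub u v)
    (hu₁len : u₁.1 = u.1 + 1) (hvlen : v.1 = u.1 + 1) (hlt : φ u.1 u₁ < φ u.1 v)
    {s : BinSeq} (hs : s.sub (ψ u₁)) (hslen : s.1 ≤ ω * u.1 + φ u.1 u₁) :
    SplitsInBlock (codedTree T ψ) u.1 s := by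
  set m := φ u.1 u₁
  have hL : ω * u.1 + (m + 1 : ℕ) < ω * (u.1 + 1) := omega0_mul_add_natCast_lt _ _
  have hLu₁ : ω * u.1 + (m + 1 : ℕ) ≤ (ψ u₁).1 := by rw [hψ.length_eq _ hu₁, hu₁len]; exact hL.le
  have hLv : ω * u.1 + (m + 1 : ℕ) ≤ (ψ v).1 := by rw [hψ.length_eq _ hv, hvlen]; exact hL.le
  have hmL : ω * u.1 + m < ω * u.1 + (m + 1 : ℕ) := by
    rw [add_lt_add_iff_left]
    exact_mod_cast m.lt_succ_self
  have hbit₁ := hψ.bit_omega0_mul_add hdc hu₁ (OmSeq.sub_refl _) hu₁len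
  have hbitv := hψ.bit_omega0_mul_add hdc hv (OmSeq.sub_refl _) hvlen
  have hagree : ∀ x < ω * u.1 + m, (ψ u₁).bit x = (ψ v).bit x := by
    intro x hx
    rcases lt_omega0_mul_add_one_iff.1 (hx.trans (omega0_mul_add_natCast_lt _ m)) with hx | ⟨k, rfl⟩
    · have hxu : x < (ψ u).1 := by rwa [hψ.length_eq u (OmSeq.mem_of_sub hdc hu₁ huu₁)]
      rw [← (hψ.map_sub hu₁ huu₁).bit_eq hxu, (hψ.map_sub hv huv).bit_eq hxu]
    · have hk : k < m := by exact_mod_cast (add_lt_add_iff_left _).1 hx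
      rw [hbit₁, hbitv]
      exact (decide_eq_true hk).trans (decide_eq_true (hk.trans hlt)).symm
  have hslt : s.1 < ω * u.1 + (m + 1 : ℕ) := hslen.trans_lt hmL
  refine ⟨_, ⟨u₁, hu₁, (ψ u₁).restrict_sub _ hLu₁⟩, _, ⟨v, hv, (ψ v).restrict_sub _ hLv⟩,
    BinSeq.ssub_iff_sub_and_lt.2 ⟨BinSeq.sub_of_sub_of_le hs ((ψ u₁).restrict_sub _ hLu₁)
      hslt.le, hslt⟩,
    BinSeq.ssub_iff_sub_and_lt.2 ⟨BinSeq.sub_iff_bit.2 ⟨hslt.le, fun x hx => ?_⟩, hslt⟩,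
    rfl, hL, fun hyz => ?_⟩
  · rw [BinSeq.bit_restrict _ _ (hx.trans hslt), hs.bit_eq hx, hagree x (hx.trans_le hslen)]
  · have h := congrArg (BinSeq.bit · (ω * u.1 + m)) hyz
    simp only [BinSeq.bit_restrict _ _ hmL] at h
    rw [hbit₁, hbitv, decide_eq_decide] at h
    exact lt_irrefl m (h.2 hlt)

lemma splitsInBlock_of_bit_true (hψ : IsBlockCoding T φ ψ)
    (hdc : ∀ t ∈ T, ∀ β, ∀ h : β ≤ t.1, t.restrict β h ∈ T)
    (hsplit : ∀ t ∈ T, {t' | t' ∈ T ∧ t'.1 = t.1 + 1 ∧ t.sub t'}.Infinite)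
    (hφ : ∀ α, InjOn (φ α) {t | t ∈ T ∧ t.1 = α + 1}) {s : BinSeq} (hs : s ∈ codedTree T ψ)
    {α : Ordinal} {n : ℕ} (hlen : s.1 = ω * α + n + 1) (hbit : s.bit (ω * α + n) = true) :
    SplitsInBlock (codedTree T ψ) α s := by
  obtain ⟨t, ht, hst⟩ := hs
  have hn : ω * α + n < s.1 := hlen ▸ Order.lt_add_one_iff.2 le_rfl
  have hα : α < t.1 :=
    lt_of_omega0_mul_add_lt le_self_add (hψ.length_eq t ht ▸ hn.trans_le hst.1)
  have hα₁ : α + 1 ≤ t.1 := Order.add_one_le_of_lt hα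
  set u₁ := t.restrict (α + 1) hα₁
  have hu₁ : u₁ ∈ T := hdc t ht _ _
  have hm : n < φ α u₁ := by
    rw [hst.bit_eq hn, hψ.bit_omega0_mul_add hdc ht (t.restrict_sub _ hα₁) rfl] at hbit
    exact of_decide_eq_true hbit
  obtain ⟨v, hv, hvlen, huv, hlt⟩ := exists_succ_lt_code hsplit hφ (hdc t ht α hα.le) (φ α u₁)
  have hslen : s.1 ≤ ω * α + φ α u₁ := by
    rw [hlen, add_assoc, ← Nat.cast_add_one, add_le_add_iff_left]
    exact_mod_cast hm
  refine hψ.splitsInBlock_of_lt hdc hu₁ hv ⟨le_self_add, rfl⟩ huv rfl hvlen hlt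
    (BinSeq.sub_of_sub_of_le hst (hψ.map_sub ht (t.restrict_sub _ _)) ?_) hslen
  rw [hψ.length_eq _ hu₁]
  exact hslen.trans (omega0_mul_add_natCast_lt α _).le

lemma bit_eq_true_iff_splitsInBlock (hψ : IsBlockCoding T φ ψ)
    (hdc : ∀ t ∈ T, ∀ β, ∀ h : β ≤ t.1, t.restrict β h ∈ T)
    (hsplit : ∀ t ∈ T, {t' | t' ∈ T ∧ t'.1 = t.1 + 1 ∧ t.sub t'}.Infinite)
    (hφ : ∀ α, InjOn (φ α) {t | t ∈ T ∧ t.1 = α + 1}) {s : BinSeq} (hs : s ∈ codedTree T ψ)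
    {α : Ordinal} {n : ℕ} (hlen : s.1 = ω * α + n + 1) :
    s.bit (ω * α + n) = true ↔ SplitsInBlock (codedTree T ψ) α s :=
  ⟨hψ.splitsInBlock_of_bit_true hdc hsplit hφ hs hlen, fun h => by
    by_contra hbit
    exact not_splitsInBlock_of_bit_false (fun y hy => hψ.exists_code hdc hy α) hlen
      (Bool.eq_false_iff.2 hbit) h⟩

end IsBlockCoding

theorem statement15_general (T : Set OmSeq)
    (hdom : ∀ t ∈ T, t.1 < omega1)
    (hdc : ∀ t ∈ T, ∀ β, ∀ h : β ≤ t.1, t.restrict β h ∈ T)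
    (hcnt : ∀ α < omega1, {t | t ∈ T ∧ t.1 = α}.Countable)
    (hsplit : ∀ t ∈ T, {t' | t' ∈ T ∧ t'.1 = t.1 + 1 ∧ t.sub t'}.Infinite)
    (φ : Ordinal → OmSeq → ℕ)
    (hφ : ∀ α, Set.InjOn (φ α) {t | t ∈ T ∧ t.1 = α + 1})
    (ψ : OmSeq → BinSeq)
    (hψdom : ∀ t ∈ T, (ψ t).1 = Ordinal.omega0 * t.1)
    (hψmono : ∀ t ∈ T, ∀ β, ∀ h : β ≤ t.1, BinSeq.sub (ψ (t.restrict β h)) (ψ t))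
    (hψsucc : ∀ t ∈ T, ∀ α, t.1 = α + 1 → ∀ n : ℕ,
      ∀ h : Ordinal.omega0 * α + (n : Ordinal) < (ψ t).1,
        (ψ t).2 ⟨Ordinal.omega0 * α + (n : Ordinal), h⟩ = decide (n < φ α t))
    (S : Set BinSeq)
    (hS : S = {s | ∃ t ∈ T, BinSeq.sub s (ψ t)}) :
    IsBinaryAleph1Tree S ∧
    ∀ π : BinSeq → BinSeq, Set.BijOn π S S →
      (∀ s ∈ S, ∀ s' ∈ S, BinSeq.ssub s s' ↔ BinSeq.ssub (π s) (π s')) →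
      ∀ s ∈ S, π s = s := by
  obtain rfl : S = codedTree T ψ := hS
  have hψ : IsBlockCoding T φ ψ := ⟨hψdom, hψmono, hψsucc⟩
  have htree := hψ.isBinaryAleph1Tree hdom hdc hcnt
  refine ⟨htree, fun π hbij hiff => ?_⟩
  have hπ : IsTreeAut (codedTree T ψ) π := ⟨hbij, hiff⟩
  have hbit : ∀ s ∈ codedTree T ψ, ∀ δ, s.1 = δ + 1 → (π s).bit δ = s.bit δ := by
    intro s hs δ hδ
    obtain ⟨α, n, rfl⟩ := exists_eq_omega0_mul_add_natCast δ
    have hπδ : (π s).1 = ω * α + n + 1 := (hπ.length_eq htree.downward_closed hs).trans hδ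
    rw [Bool.eq_iff_iff, hψ.bit_eq_true_iff_splitsInBlock hdc hsplit hφ (hbij.mapsTo hs) hπδ,
      hψ.bit_eq_true_iff_splitsInBlock hdc hsplit hφ hs hδ,
      hπ.splitsInBlock_iff htree.downward_closed hs]
  exact fun s hs => hπ.eq_self_of_bit_eq htree.downward_closed hbit hs

/-- Let `T` be a downward-closed family of functions `t : α → ω` (`α < ω₁`)
such that `(T, ⊊)` is an ℵ₁-tree in which every node admits infinitely many immediate
successors. Fix injections `φ_α : T_{α+1} → ω`, let `r_m : ω → 2` be given by
`r_m(n) = 1 ↔ n < m`, and let `ψ : T → <ω₁2` be the recursively defined map with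
`dom(ψ(t)) = ω · dom(t)`, `ψ(t ↾ β) ⊆ ψ(t)`, and `ψ(t) = ψ(t⁻) ⌢ r_{φ_α(t)}` for
`t ∈ T_{α+1}` (so `ψ(t)(ω·α + n) = r_{φ_α(t)}(n)`). Let `S` be the downward closure of
the image of `ψ`. Then `S` is a binary ℵ₁-tree and every automorphism of `(S, ⊊)` is
the identity. -/
theorem statement15 (T : Set OmSeq)
    (hdom : ∀ t ∈ T, t.1 < omega1)
    (hdc : ∀ t ∈ T, ∀ β, ∀ h : β ≤ t.1, t.restrict β h ∈ T)
    (hcnt : ∀ α < omega1, {t | t ∈ T ∧ t.1 = α}.Countable)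
    (hne : ∀ α < omega1, {t | t ∈ T ∧ t.1 = α}.Nonempty)
    (hsplit : ∀ t ∈ T, {t' | t' ∈ T ∧ t'.1 = t.1 + 1 ∧ t.sub t'}.Infinite)
    (φ : Ordinal → OmSeq → ℕ)
    (hφ : ∀ α, Set.InjOn (φ α) {t | t ∈ T ∧ t.1 = α + 1})
    (ψ : OmSeq → BinSeq)
    (hψdom : ∀ t ∈ T, (ψ t).1 = Ordinal.omega0 * t.1)
    (hψmono : ∀ t ∈ T, ∀ β, ∀ h : β ≤ t.1, BinSeq.sub (ψ (t.restrict β h)) (ψ t))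
    (hψsucc : ∀ t ∈ T, ∀ α, t.1 = α + 1 → ∀ n : ℕ,
      ∀ h : Ordinal.omega0 * α + (n : Ordinal) < (ψ t).1,
        (ψ t).2 ⟨Ordinal.omega0 * α + (n : Ordinal), h⟩ = decide (n < φ α t))
    (S : Set BinSeq)
    (hS : S = {s | ∃ t ∈ T, BinSeq.sub s (ψ t)}) :
    IsBinaryAleph1Tree S ∧
    ∀ π : BinSeq → BinSeq, Set.BijOn π S S →
      (∀ s ∈ S, ∀ s' ∈ S, BinSeq.ssub s s' ↔ BinSeq.ssub (π s) (π s')) →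
      ∀ s ∈ S, π s = s :=
  statement15_general T hdom hdc hcnt hsplit φ hφ ψ hψdom hψmono hψsucc S hS
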